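/- arXiv:2004.06830 — 3 statements merged into one kernel-verified Lean document; each statement's English description precedes it below -/
import Mathlib

section
/- Coupling of product measures via total variation: Let 𝒳 be a standard Borel space, let q₁, q₂ be probability measures on 𝒳, and let n ∈ ℕ. Then there exists a coupling π of the n-fold product measures q₁^{⊗n} and q₂^{⊗n} on 𝒳^n × 𝒳^n such that the expected Hamming distance satisfies ∫ ham(x,y) dπ(x,y) = n · d_TV(q₁, q₂). -/
/-!
A Hahn decomposition for `q₁, q₂` splits them as `q₁ = ν + α`, `q₂ = ν + β` with `α ⟂ₘ β`, and then
`d_TV(q₁, q₂) = α(𝒳) = β(𝒳)`. The maximal coupling puts `ν` on the diagonal and the normalised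
product `α ⊗ β / α(𝒳)` off it, so its two coordinates differ with probability exactly `d_TV`.
Taking `n` independent copies of it, each coordinate of the pair disagrees with probability
`d_TV`, and linearity of expectation gives `n · d_TV` for the expected Hamming distance.
-/

open MeasureTheory ProbabilityTheory ENNReal

/-- Hamming distance between two datasets in `𝒳^n`. -/
noncomputable def ham {𝒳 : Type*} {n : ℕ} (x y : Fin n → 𝒳) : ℕ :=
  letI : DecidableEq 𝒳 := Classical.decEq 𝒳
  (Finset.univ.filter fun i => x i ≠ y i).card

/-- Total variation distance: `sup_A (p(A) - q(A))` over measurable sets `A`. -/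
noncomputable def tvDist {Ω : Type*} [MeasurableSpace Ω] (p q : Measure Ω) : ℝ :=
  ⨆ S : {S : Set Ω // MeasurableSet S}, ((p S).toReal - (q S).toReal)

open Set

lemma ham_eq_sum_indicator {X : Type*} {n : ℕ} (x y : Fin n → X) :
    (ham x y : ℝ≥0∞) = ∑ i, (diagonal X)ᶜ.indicator 1 (x i, y i) := by
  classical
  simp only [ham, Finset.card_filter, Nat.cast_sum]
  refine Finset.sum_congr rfl fun i _ => ?_
  by_cases h : x i = y i <;> simp [h]

namespace MeasureTheory

variable {Ω : Type*} [MeasurableSpace Ω]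

instance StandardBorelSpace.measurableEq [StandardBorelSpace Ω] : MeasurableEq Ω := by
  let := upgradeStandardBorel Ω
  exact ⟨isClosed_diagonal.measurableSet⟩

lemma Measure.MutuallySingular.prod_diagonal_eq_zero {α β : Measure Ω} [SFinite β]
    (h : α ⟂ₘ β) : α.prod β (diagonal Ω) = 0 := by
  have hsub : diagonal Ω ⊆ h.nullSet ×ˢ univ ∪ univ ×ˢ h.nullSetᶜ := by
    rintro ⟨x, y⟩ (rfl : x = y)
    by_cases hx : x ∈ h.nullSet
    · exact Or.inl ⟨hx, trivial⟩
    · exact Or.inr ⟨trivial, hx⟩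
  refine measure_mono_null hsub (measure_union_null ?_ ?_)
  · rw [Measure.prod_prod, h.measure_nullSet, zero_mul]
  · rw [Measure.prod_prod, h.measure_compl_nullSet, mul_zero]

lemma Measure.inv_measure_univ_smul_smul (μ : Measure Ω) [IsFiniteMeasure μ] :
    (μ univ)⁻¹ • μ univ • μ = μ := by
  rcases eq_zero_or_neZero μ with rfl | _
  · simp
  rw [smul_smul, ENNReal.inv_mul_cancel (NeZero.ne _) (measure_ne_top _ _), one_smul]

lemma exists_coupling_of_mutuallySingular {α β : Measure Ω} [IsFiniteMeasure α]
    [IsFiniteMeasure β] (h : α ⟂ₘ β) (hmass : α univ = β univ) :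
    ∃ γ : Measure (Ω × Ω), γ.map Prod.fst = α ∧ γ.map Prod.snd = β ∧ γ (diagonal Ω) = 0 := by
  refine ⟨(α univ)⁻¹ • α.prod β, ?_, ?_, ?_⟩
  · rw [Measure.map_smul, Measure.map_fst_prod, ← hmass, Measure.inv_measure_univ_smul_smul]
  · rw [Measure.map_smul, Measure.map_snd_prod, hmass, Measure.inv_measure_univ_smul_smul]
  · rw [Measure.smul_apply, h.prod_diagonal_eq_zero, smul_zero]

lemma exists_add_add_mutuallySingular (q₁ q₂ : Measure Ω) [IsFiniteMeasure q₁]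
    [IsFiniteMeasure q₂] : ∃ ν α β : Measure Ω, IsFiniteMeasure ν ∧ IsFiniteMeasure α ∧
      IsFiniteMeasure β ∧ q₁ = ν + α ∧ q₂ = ν + β ∧ α ⟂ₘ β := by
  obtain ⟨s, hs, h₂₁, h₁₂⟩ := hahn_decomposition q₁ q₂
  have hle₁ : q₂.restrict s ≤ q₁.restrict s := Measure.le_iff.2 fun t ht => by
    simp only [Measure.restrict_apply ht]
    exact h₂₁ _ (ht.inter hs) inter_subset_right
  have hle₂ : q₁.restrict sᶜ ≤ q₂.restrict sᶜ := Measure.le_iff.2 fun t ht => by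
    simp only [Measure.restrict_apply ht]
    exact h₁₂ _ (ht.inter hs.compl) inter_subset_right
  refine ⟨q₂.restrict s + q₁.restrict sᶜ, q₁.restrict s - q₂.restrict s,
    q₂.restrict sᶜ - q₁.restrict sᶜ, inferInstance, inferInstance, inferInstance, ?_, ?_, ?_⟩
  · rw [add_right_comm, add_comm (q₂.restrict s), Measure.sub_add_cancel_of_le hle₁,
      Measure.restrict_add_restrict_compl hs]
  · rw [add_assoc, add_comm (q₁.restrict sᶜ), Measure.sub_add_cancel_of_le hle₂,
      Measure.restrict_add_restrict_compl hs]
  · refine (Measure.MutuallySingular.mk (s := sᶜ) (t := s) ?_ ?_ (by simp)).mono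
      Measure.sub_le Measure.sub_le <;>
    simp [Measure.restrict_apply' hs, Measure.restrict_apply' hs.compl]

end MeasureTheory

section TotalVariation

variable {Ω : Type*} [MeasurableSpace Ω]

lemma tvDist_add_add_left (ν α β : Measure Ω) [IsFiniteMeasure ν] [IsFiniteMeasure α]
    [IsFiniteMeasure β] : tvDist (ν + α) (ν + β) = tvDist α β := by
  simp only [tvDist, Measure.add_apply,
    ENNReal.toReal_add (measure_ne_top _ _) (measure_ne_top _ _), add_sub_add_left_eq_sub]

lemma tvDist_eq_of_mutuallySingular {α β : Measure Ω} [IsFiniteMeasure α] [IsFiniteMeasure β]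
    (h : α ⟂ₘ β) : tvDist α β = (α univ).toReal := by
  have hbound (S : {S : Set Ω // MeasurableSet S}) :
      (α S).toReal - (β S).toReal ≤ (α univ).toReal := by
    have := ENNReal.toReal_mono (measure_ne_top α univ) (measure_mono (subset_univ S.1))
    linarith [ENNReal.toReal_nonneg (a := β S)]
  refine le_antisymm (ciSup_le hbound) (le_ciSup_of_le ⟨_, forall_mem_range.2 hbound⟩
    ⟨h.nullSetᶜ, h.measurableSet_nullSet.compl⟩ ?_)
  rw [measure_compl h.measurableSet_nullSet (measure_ne_top _ _), h.measure_nullSet,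
    h.measure_compl_nullSet, tsub_zero, ENNReal.toReal_zero, sub_zero]

theorem exists_coupling_measure_compl_diagonal_eq_tvDist [MeasurableEq Ω] (q₁ q₂ : Measure Ω)
    [IsProbabilityMeasure q₁] [IsProbabilityMeasure q₂] :
    ∃ μ : Measure (Ω × Ω), μ.map Prod.fst = q₁ ∧ μ.map Prod.snd = q₂ ∧
      μ (diagonal Ω)ᶜ = ENNReal.ofReal (tvDist q₁ q₂) := by
  obtain ⟨ν, α, β, _, _, _, rfl, rfl, hαβ⟩ := exists_add_add_mutuallySingular q₁ q₂
  have hmass : α univ = β univ := by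
    refine (ENNReal.add_right_inj (measure_ne_top ν univ)).1 ?_
    rw [← Measure.add_apply, ← Measure.add_apply, measure_univ, measure_univ]
  obtain ⟨γ, hγ₁, hγ₂, hγdiag⟩ := exists_coupling_of_mutuallySingular hαβ hmass
  have hdiag : Measurable fun x : Ω => (x, x) := measurable_id.prodMk measurable_id
  refine ⟨ν.map (fun x => (x, x)) + γ, ?_, ?_, ?_⟩
  · rw [Measure.map_add _ _ measurable_fst, Measure.map_map measurable_fst hdiag, hγ₁]
    exact congrArg (· + α) Measure.map_id
  · rw [Measure.map_add _ _ measurable_snd, Measure.map_map measurable_snd hdiag, hγ₂]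
    exact congrArg (· + β) Measure.map_id
  have hγoff : γ (diagonal Ω)ᶜ = α univ := by
    rw [← hγ₁, Measure.map_apply measurable_fst .univ, preimage_univ,
      ← measure_add_measure_compl measurableSet_diagonal, hγdiag, zero_add]
  have hνoff : ν.map (fun x => (x, x)) (diagonal Ω)ᶜ = 0 := by
    rw [Measure.map_apply hdiag measurableSet_diagonal.compl,
      show (fun x : Ω => (x, x)) ⁻¹' (diagonal Ω)ᶜ = ∅ by ext; simp, measure_empty]
  rw [Measure.add_apply, hνoff, zero_add, hγoff, tvDist_add_add_left,
    tvDist_eq_of_mutuallySingular hαβ, ENNReal.ofReal_toReal (measure_ne_top _ _)]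

end TotalVariation

namespace MeasureTheory.Measure

variable {X Y : Type*} [MeasurableSpace X] [MeasurableSpace Y]

noncomputable def piCoupling (μ : Measure (X × Y)) (ι : Type*) [Fintype ι] :
    Measure ((ι → X) × (ι → Y)) :=
  (Measure.pi fun _ : ι => μ).map (MeasurableEquiv.arrowProdEquivProdArrow X Y ι)

section

variable (μ : Measure (X × Y)) (ι : Type*) [Fintype ι]

instance [IsProbabilityMeasure μ] : IsProbabilityMeasure (μ.piCoupling ι) :=
  isProbabilityMeasure_map (MeasurableEquiv.measurable _).aemeasurable

lemma map_fst_piCoupling [IsFiniteMeasure μ] :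
    (μ.piCoupling ι).map Prod.fst = Measure.pi fun _ : ι => μ.map Prod.fst := by
  rw [piCoupling, map_map measurable_fst (MeasurableEquiv.measurable _)]
  exact pi_map_pi fun _ => measurable_fst.aemeasurable

lemma map_snd_piCoupling [IsFiniteMeasure μ] :
    (μ.piCoupling ι).map Prod.snd = Measure.pi fun _ : ι => μ.map Prod.snd := by
  rw [piCoupling, map_map measurable_snd (MeasurableEquiv.measurable _)]
  exact pi_map_pi fun _ => measurable_snd.aemeasurable

end

lemma lintegral_ham_piCoupling [MeasurableEq X] (μ : Measure (X × X)) [IsProbabilityMeasure μ]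
    (n : ℕ) : ∫⁻ z, (ham z.1 z.2 : ℝ≥0∞) ∂μ.piCoupling (Fin n) = n * μ (diagonal X)ᶜ := by
  have hind : Measurable ((diagonal X)ᶜ.indicator (1 : X × X → ℝ≥0∞)) :=
    measurable_one.indicator measurableSet_diagonal.compl
  have hterm (i : Fin n) : Measurable fun g : Fin n → X × X => (diagonal X)ᶜ.indicator 1 (g i) :=
    hind.comp (measurable_pi_apply i)
  rw [piCoupling, lintegral_map_equiv]
  simp only [ham_eq_sum_indicator]
  change ∫⁻ g : Fin n → X × X, ∑ i, (diagonal X)ᶜ.indicator 1 (g i) ∂_ = _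
  rw [lintegral_finsetSum _ fun i _ => hterm i]
  simp only [fun i => (measurePreserving_eval (fun _ : Fin n => μ) i).lintegral_comp hind,
    lintegral_indicator_one measurableSet_diagonal.compl, Finset.sum_const, Finset.card_univ,
    Fintype.card_fin, nsmul_eq_mul]

end MeasureTheory.Measure

/-- Coupling of product measures via total variation: for probability measures `q₁, q₂` on a
standard Borel space `𝒳` and any `n`, there exists a coupling `π` of the `n`-fold products
`q₁^{⊗n}` and `q₂^{⊗n}` whose expected Hamming distance equals `n · d_TV(q₁, q₂)`. -/
theorem coupling_product_tv {𝒳 : Type*} [MeasurableSpace 𝒳] [StandardBorelSpace 𝒳]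
    (q₁ q₂ : Measure 𝒳) [IsProbabilityMeasure q₁] [IsProbabilityMeasure q₂] (n : ℕ) :
    ∃ π : Measure ((Fin n → 𝒳) × (Fin n → 𝒳)), IsProbabilityMeasure π ∧
      π.map Prod.fst = Measure.pi (fun _ : Fin n => q₁) ∧
      π.map Prod.snd = Measure.pi (fun _ : Fin n => q₂) ∧
      ∫⁻ z, (ham z.1 z.2 : ℝ≥0∞) ∂π = ENNReal.ofReal (n * tvDist q₁ q₂) := by
  obtain ⟨μ, hμ₁, hμ₂, hμoff⟩ := exists_coupling_measure_compl_diagonal_eq_tvDist q₁ q₂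
  have : IsProbabilityMeasure μ := by
    have : IsProbabilityMeasure (μ.map Prod.fst) := hμ₁ ▸ inferInstance
    exact Measure.isProbabilityMeasure_of_map Prod.fst
  refine ⟨μ.piCoupling (Fin n), inferInstance, ?_, ?_, ?_⟩
  · rw [Measure.map_fst_piCoupling, hμ₁]
  · rw [Measure.map_snd_piCoupling, hμ₂]
  · rw [Measure.lintegral_ham_piCoupling, hμoff, ENNReal.ofReal_mul n.cast_nonneg,
      ENNReal.ofReal_natCast]
end

section
/- Gilbert–Varshamov bound for constant-weight binary codes: Let l and k be integers with 20 ≤ l ≤ k/2. Then there exists a set 𝒞 of binary vectors of length k (elements of {0,1}^k), each of constant weight l (exactly l coordinates equal to 1), such that any two distinct codewords in 𝒞 have Hamming distance at least l/4, and |𝒞| ≥ (k/(2^{7/8}·l))^{7l/8}. -/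
/-!
Take a maximal family of weight-`l` words at pairwise distance at least `l / 4`. By maximality
the balls of radius `< l / 4` around its words cover all `C(k, l)` words of weight `l`. Two words
of weight `l` at distance `2j` differ by moving `j` ones onto `j` zeros, so such a ball holds at
most `(t + 1) C(k - l, t) C(l, t)` words, `t = ⌊(l - 1) / 8⌋`. What is left is the estimate
`(t + 1) C(k - l, t) C(l, t) (k / (2^{7/8} l))^{7l/8} ≤ C(k, l)`, proved on logarithms: `C(k, l)`
from below through the falling factorial and Stirling's bound on `l!`, the two small binomials
from above by `C(m, t) p^t (1 - p)^{m - t} ≤ 1` with `p = 1/8` and `p = l / (8 (k - l))`.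
-/

open Finset Real
open scoped Nat

namespace GilbertVarshamov

theorem log_factorial_le {n : ℕ} (hn : n ≠ 0) :
    log n ! ≤ n * log n - n + log n / 2 + 1 := by
  have hanti : log (Stirling.stirlingSeq n) ≤ log (Stirling.stirlingSeq 1) := by
    simpa [Nat.sub_add_cancel (Nat.one_le_iff_ne_zero.mpr hn)] using
      Stirling.log_stirlingSeq'_antitone (Nat.zero_le (n - 1))
  rw [Stirling.log_stirlingSeq_formula, Stirling.stirlingSeq_one] at hanti
  have hn' : (0 : ℝ) < n := by positivity
  rw [log_div (exp_pos 1).ne' (by positivity), log_exp, log_mul two_ne_zero hn'.ne',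
    log_div hn'.ne' (exp_pos 1).ne', log_exp, log_sqrt zero_le_two] at hanti
  linarith

theorem neg_log_one_sub_le {p : ℝ} (hp : p < 1) : -log (1 - p) ≤ p / (1 - p) := by
  have h := one_sub_inv_le_log_of_pos (sub_pos.mpr hp)
  have : 1 - (1 - p)⁻¹ = -(p / (1 - p)) := by field_simp [(sub_pos.mpr hp).ne']; ring
  linarith

theorem log_le_div_eight_add {x : ℝ} (hx : 0 < x) : log x ≤ x / 8 + log 8 - 1 := by
  have h := log_le_sub_one_of_pos (x := x / 8) (by positivity)
  rw [log_div hx.ne' (by norm_num)] at h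
  linarith

theorem log_descFactorial_ge {k l : ℕ} (hlk : 2 * l ≤ k) :
    l * log k - l ^ 2 / k ≤ log (k.descFactorial l) := by
  have hterm : ∀ i ∈ range l, log k - 2 * i / k ≤ log ((k - i : ℕ) : ℝ) := by
    intro i hi
    have hik : 2 * i < k := by rw [mem_range] at hi; omega
    have hk : (0 : ℝ) < k := by norm_cast; omega
    have hki : (0 : ℝ) < (k - i : ℕ) := by norm_cast; omega
    rw [Nat.cast_sub (by omega)] at hki ⊢
    have h := neg_log_one_sub_le (p := i / k) (by rw [div_lt_one hk]; norm_cast; omega)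
    rw [one_sub_div hk.ne', log_div hki.ne' hk.ne', div_div_div_cancel_right₀ hk.ne'] at h
    have : (i : ℝ) / (k - i) ≤ 2 * i / k := by
      rw [div_le_div_iff₀ hki hk]
      have : (2 * i : ℝ) ≤ k := by exact_mod_cast hik.le
      nlinarith [(Nat.cast_nonneg i : (0 : ℝ) ≤ i)]
    linarith
  have hsum : ∑ i ∈ range l, (2 * i / k : ℝ) ≤ l ^ 2 / k := by
    rw [← sum_div]
    gcongr
    have : ∑ i ∈ range l, 2 * i ≤ l ^ 2 := by
      rw [← mul_sum, mul_comm, sum_range_id_mul_two, sq]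
      exact Nat.mul_le_mul_left _ (Nat.sub_le _ _)
    exact_mod_cast this
  calc l * log k - l ^ 2 / k ≤ ∑ i ∈ range l, (log k - 2 * i / k) := by
        rw [sum_sub_distrib, sum_const, card_range, nsmul_eq_mul]
        linarith
    _ ≤ ∑ i ∈ range l, log ((k - i : ℕ) : ℝ) := sum_le_sum hterm
    _ = log (k.descFactorial l) := by
        rw [Nat.descFactorial_eq_prod_range, Nat.cast_prod, log_prod]
        intro i hi
        rw [mem_range] at hi
        norm_cast
        omega

theorem log_choose_ge {k l : ℕ} (hl : l ≠ 0) (hlk : 2 * l ≤ k) :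
    l * log k - l ^ 2 / k + l - l * log l - log l / 2 - 1 ≤ log (k.choose l) := by
  have hdesc := log_descFactorial_ge hlk
  have hfac := log_factorial_le hl
  rw [Nat.descFactorial_eq_factorial_mul_choose, Nat.cast_mul,
    log_mul (by positivity) (by exact_mod_cast (Nat.choose_pos (by omega)).ne')] at hdesc
  linarith

theorem choose_mul_pow_mul_pow_le_one {m t : ℕ} (ht : t ≤ m) {p : ℝ} (hp0 : 0 ≤ p)
    (hp1 : p ≤ 1) : m.choose t * p ^ t * (1 - p) ^ (m - t) ≤ 1 := by
  have hsum : ∑ j ∈ range (m + 1), p ^ j * (1 - p) ^ (m - j) * m.choose j = 1 := by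
    rw [← add_pow]; simp
  calc m.choose t * p ^ t * (1 - p) ^ (m - t) = p ^ t * (1 - p) ^ (m - t) * m.choose t := by
        ring
    _ ≤ ∑ j ∈ range (m + 1), p ^ j * (1 - p) ^ (m - j) * m.choose j :=
        single_le_sum (f := fun j => p ^ j * (1 - p) ^ (m - j) * m.choose j)
          (fun j _ => by have := sub_nonneg.mpr hp1; positivity) (mem_range_succ_iff.mpr ht)
    _ = 1 := hsum

theorem log_choose_le {m t : ℕ} (ht : t ≤ m) {p : ℝ} (hp0 : 0 < p) (hp1 : p < 1) :
    log (m.choose t) ≤ -(t * log p) - (m - t) * log (1 - p) := by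
  have h := choose_mul_pow_mul_pow_le_one ht hp0.le hp1.le
  have hq : 0 < 1 - p := sub_pos.mpr hp1
  have hC : (0 : ℝ) < m.choose t := by exact_mod_cast Nat.choose_pos ht
  have := log_nonpos (by positivity) h
  rw [log_mul (by positivity) (by positivity), log_mul hC.ne' (by positivity), log_pow, log_pow,
    Nat.cast_sub ht] at this
  linarith

theorem log_choose_le_mul_log_eight_sub {l t : ℕ} (ht : t ≤ l) :
    log (l.choose t) ≤ l * log 8 - (l - t) * log 7 := by
  have h := log_choose_le ht (p := 1 / 8) (by norm_num) (by norm_num)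
  rw [one_div, log_inv, show (1 : ℝ) - 8⁻¹ = 7 / 8 by norm_num,
    log_div (by norm_num) (by norm_num)] at h
  linarith

theorem log_choose_le_mul_log_eight_mul_div_add {n l t : ℕ} (hl : 0 < l) (hln : l ≤ n)
    (ht : t ≤ n) :
    log (n.choose t) ≤ t * log (8 * n / l) + l / 7 := by
  set p : ℝ := l / (8 * n)
  have hn : (0 : ℝ) < n := by norm_cast; omega
  have hp0 : 0 < p := by positivity
  have hp78 : 7 / 8 ≤ 1 - p := by
    rw [le_sub_comm, div_le_iff₀ (by positivity)]
    have : (l : ℝ) ≤ n := by exact_mod_cast hln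
    linarith
  have htail : (n - t) * -log (1 - p) ≤ l / 7 := by
    have hlog : -log (1 - p) ≤ p / (7 / 8) :=
      (neg_log_one_sub_le (by linarith)).trans
        (div_le_div_of_nonneg_left hp0.le (by norm_num) hp78)
    calc (n - t) * -log (1 - p) ≤ n * (p / (7 / 8)) :=
          mul_le_mul (by simp) hlog (neg_nonneg.mpr (log_nonpos (by linarith) (by linarith)))
            hn.le
      _ = l / 7 := by simp only [p]; field_simp
  have h := log_choose_le ht hp0 (by linarith)
  rw [← neg_mul_eq_mul_neg] at htail
  rw [show log (8 * n / l) = -log p by rw [← log_inv, inv_div]]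
  linarith

theorem log_two_div_eight_sub_half_le {l n : ℝ} (hl : 0 < l) (hln : l ≤ n) :
    log 2 / 8 - 1 / 2 ≤ (log (n + l) - log n) / 8 - l / (n + l) := by
  have hn : 0 < n := hl.trans_le hln
  set u := l / n
  have hu0 : 0 ≤ u := by positivity
  have hu1 : u ≤ 1 := by rw [div_le_one hn]; exact hln
  have hlog : log (n + l) - log n = log (1 + u) := by
    rw [← log_div (by positivity) hn.ne']; congr 1; simp only [u]; field_simp
  have hfrac : l / (n + l) = u / (1 + u) := by simp only [u]; field_simp
  -- Bernoulli: `2 ^ u ≤ 1 + u`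
  have hbern : u * log 2 ≤ log (1 + u) := by
    have h := rpow_one_add_le_one_add_mul_self (s := 1) (by norm_num) hu0 hu1
    rw [← log_rpow two_pos]
    exact log_le_log (by positivity) (by norm_num at h ⊢; linarith)
  have hlog2 := log_two_lt_d9
  have key : 0 ≤ (1 - u) * (1 / (2 * (1 + u)) - log 2 / 8) := by
    apply mul_nonneg (by linarith)
    rw [sub_nonneg, div_le_div_iff₀ (by norm_num) (by positivity)]
    nlinarith [mul_le_mul_of_nonneg_left hu1 (log_pos one_lt_two).le]
  have : log 2 / 8 - 1 / 2 + (1 - u) * (1 / (2 * (1 + u)) - log 2 / 8)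
      = u * log 2 / 8 - u / (1 + u) := by field_simp; ring
  rw [hlog, hfrac]
  linarith

theorem fourteen_mul_log_two_le_five_mul_log_seven : 14 * log 2 ≤ 5 * log 7 := by
  have h := log_le_log (by norm_num) (show (2 : ℝ) ^ 14 ≤ 7 ^ 5 by norm_num)
  rw [log_pow, log_pow] at h
  push_cast at h
  linarith

theorem succ_mul_choose_mul_choose_mul_le_choose {l k t : ℕ} (hl : 20 ≤ l) (hlk : 2 * l ≤ k)
    (ht : 8 * t < l) :
    ((t + 1 : ℝ) * ((k - l).choose t * l.choose t)) *
      ((k : ℝ) / ((2 : ℝ) ^ ((7 : ℝ) / 8) * l)) ^ ((7 * (l : ℝ)) / 8) ≤ k.choose l := by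
  set n := k - l with hn_def
  have hk : (k : ℝ) = n + l := by rw [hn_def, Nat.cast_sub (by omega)]; ring
  have hL : (20 : ℝ) ≤ l := by exact_mod_cast hl
  have hLn : (l : ℝ) ≤ n := by exact_mod_cast (by omega : l ≤ n)
  have hT : 8 * (t : ℝ) + 1 ≤ l := by exact_mod_cast ht
  have hn0 : (0 : ℝ) < n := by linarith
  have hk0 : (0 : ℝ) < k := by linarith
  have hCl : (0 : ℝ) < l.choose t := by exact_mod_cast Nat.choose_pos (by omega)
  have hCn : (0 : ℝ) < n.choose t := by exact_mod_cast Nat.choose_pos (by omega)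
  have hlog2 := log_two_lt_d9
  have hlog8 : log 8 = 3 * log 2 := by
    rw [show (8 : ℝ) = 2 ^ 3 by norm_num, log_pow]; norm_num
  have hlog7 := fourteen_mul_log_two_le_five_mul_log_seven
  have hlogl := log_le_div_eight_add (x := l) (by positivity)
  have hchoose_kl := log_choose_ge (by omega : l ≠ 0) hlk
  rw [show (l : ℝ) ^ 2 / k = l * (l / k) by ring] at hchoose_kl
  have hchoose_l := log_choose_le_mul_log_eight_sub (l := l) (t := t) (by omega)
  have hchoose_n := log_choose_le_mul_log_eight_mul_div_add (n := n) (l := l) (t := t)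
    (by omega) (by omega) (by omega)
  rw [log_div (by positivity) (by positivity), log_mul (by norm_num) (by positivity)]
    at hchoose_n
  rw [hlog8] at hlogl hchoose_l hchoose_n
  have hsucc : log (t + 1) ≤ t := by
    linarith [log_le_sub_one_of_pos (x := t + 1) (by positivity)]
  have hgap := mul_le_mul_of_nonneg_left (log_two_div_eight_sub_half_le (by positivity) hLn)
    (by positivity : (0 : ℝ) ≤ l)
  rw [← hk] at hgap
  -- the products of the bounds above that the final linear combination uses
  have hnl : 0 ≤ ((l : ℝ) / 8 - t) * (log n - log l) :=
    mul_nonneg (by linarith) (by linarith [log_le_log (by positivity) hLn])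
  have ht7 : 0 ≤ (((l : ℝ) - 1) / 8 - t) * log 7 := mul_nonneg (by linarith) (by positivity)
  have ht2 : 0 ≤ (((l : ℝ) - 1) / 8 - t) * log 2 := mul_nonneg (by linarith) (by positivity)
  have hl2 : l * log 2 ≤ l * 0.6931471808 := mul_le_mul_of_nonneg_left hlog2.le (by positivity)
  have hl7 : l * (14 * log 2) ≤ l * (5 * log 7) := mul_le_mul_of_nonneg_left hlog7 (by positivity)
  rw [← log_le_log_iff (by positivity) (by exact_mod_cast Nat.choose_pos (by omega)),
    log_mul (by positivity) (by positivity), log_mul (by positivity) (by positivity),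
    log_mul hCn.ne' hCl.ne', log_rpow (by positivity), log_div (by positivity) (by positivity),
    log_mul (by positivity) (by positivity), log_rpow two_pos]
  linarith

theorem exists_pairwise_card_le_card_mul {α : Type*} [DecidableEq α] (S : Finset α)
    (r : α → α → Prop) [DecidableRel r] (hsymm : ∀ a b, r a b → r b a)
    (hirrefl : ∀ a, ¬ r a a) (V : ℕ) (hV : ∀ c ∈ S, #{s ∈ S | ¬ r c s} ≤ V) :
    ∃ C ⊆ S, (C : Set α).Pairwise r ∧ #S ≤ #C * V := by
  obtain ⟨C, hC, hmax⟩ := exists_max_image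
    (S.powerset.filter fun D : Finset α => (D : Set α).Pairwise r) card ⟨∅, by simp⟩
  simp only [mem_filter, mem_powerset] at hC hmax
  -- a point of `S` in relation with every member of `C` could be added to `C`
  have hcover : S ⊆ C.biUnion fun c => {s ∈ S | ¬ r c s} := by
    intro s hs
    by_contra hfar
    simp only [mem_biUnion, mem_filter, not_exists, not_and, hs, true_and, not_not] at hfar
    have hsC : s ∉ C := fun h => hirrefl s (hfar s h)
    have := hmax (insert s C) ⟨insert_subset hs hC.1,
      by rw [coe_insert]; exact hC.2.insert fun c hc _ => ⟨hsymm _ _ (hfar c hc), hfar c hc⟩⟩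
    rw [card_insert_of_notMem hsC] at this
    omega
  exact ⟨C, hC.1, hC.2, (card_le_card hcover).trans
    (card_biUnion_le_card_mul _ _ _ fun c hc => hV c (hC.1 hc))⟩

theorem sum_range_choose_mul_choose_le {n l t : ℕ} (hn : 2 * t ≤ n) (hl : 2 * t ≤ l) :
    ∑ j ∈ range (t + 1), n.choose j * l.choose j ≤ (t + 1) * (n.choose t * l.choose t) := by
  have hmono : ∀ {m : ℕ}, 2 * t ≤ m → ∀ j ≤ t, m.choose j ≤ m.choose t := by
    intro m hm j hj
    induction hj using Nat.decreasingInduction with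
    | self => rfl
    | of_succ i hi ih => exact (Nat.choose_le_succ_of_lt_half_left (by omega)).trans ih
  calc _ ≤ ∑ _j ∈ range (t + 1), n.choose t * l.choose t :=
        sum_le_sum fun j hj => Nat.mul_le_mul (hmono hn j (by simp at hj; omega))
          (hmono hl j (by simp at hj; omega))
    _ = _ := by simp

variable {ι : Type*} [Fintype ι]

def trueSupport (c : ι → Bool) : Finset ι := {i | c i = true}

theorem trueSupport_injective : Function.Injective (trueSupport (ι := ι)) := by
  intro c c' h
  funext i
  have := congrArg (i ∈ ·) h
  simp only [trueSupport, mem_filter, mem_univ, true_and, eq_iff_iff] at this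
  cases hc : c i <;> cases hc' : c' i <;> simp_all

variable [DecidableEq ι]

theorem card_filter_card_trueSupport_eq (l : ℕ) :
    #{c : ι → Bool | #(trueSupport c) = l} = (Fintype.card ι).choose l := by
  rw [← card_univ, ← card_powersetCard]
  refine card_nbij' trueSupport (fun A i => decide (i ∈ A)) ?_ ?_ ?_ ?_
  · intro c; simp
  · intro A hA
    rw [mem_coe, mem_powersetCard] at hA
    rw [mem_coe, mem_filter]
    simpa [trueSupport] using hA.2
  · intro c _; funext i; simp [trueSupport]
  · intro A _; ext i; simp [trueSupport]

theorem hammingDist_eq_card_sdiff_add_card_sdiff (c s : ι → Bool) :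
    hammingDist c s = #(trueSupport c \ trueSupport s) + #(trueSupport s \ trueSupport c) := by
  rw [← card_union_of_disjoint disjoint_sdiff_sdiff, hammingDist]
  congr 1
  ext i
  simp only [trueSupport, mem_union, mem_sdiff, mem_filter, mem_univ, true_and]
  cases c i <;> cases s i <;> simp

theorem card_filter_card_sdiff_trueSupport_le_sum (c : ι → Bool) (t : ℕ) :
    #{s : ι → Bool | #(trueSupport s) = #(trueSupport c) ∧
        #(trueSupport s \ trueSupport c) ≤ t}
      ≤ ∑ j ∈ range (t + 1),
          (Fintype.card ι - #(trueSupport c)).choose j * (#(trueSupport c)).choose j := by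
  set A := trueSupport c
  calc _ ≤ #((range (t + 1)).biUnion fun j => powersetCard j Aᶜ ×ˢ powersetCard j A) := by
        refine card_le_card_of_injOn (fun s => (trueSupport s \ A, A \ trueSupport s)) ?_ ?_
        · intro s hs
          rw [mem_coe, mem_filter] at hs
          rw [mem_coe, mem_biUnion]
          exact ⟨_, mem_range.2 (Nat.lt_succ_of_le hs.2.2), mem_product.2
            ⟨mem_powersetCard.2 ⟨fun i hi => mem_compl.2 (mem_sdiff.1 hi).2, rfl⟩,
              mem_powersetCard.2 ⟨sdiff_subset, (card_sdiff_comm hs.2.1).symm⟩⟩⟩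
        · intro s _ s' _ h
          simp only [Prod.mk.injEq] at h
          have hsplit : ∀ B : Finset ι, B = (B \ A) ∪ (A \ (A \ B)) := by
            intro B; ext i; simp only [mem_union, mem_sdiff]; tauto
          exact trueSupport_injective
            (by rw [hsplit (trueSupport s), hsplit (trueSupport s'), h.1, h.2])
    _ ≤ _ := by
        refine card_biUnion_le.trans (sum_le_sum fun j _ => ?_)
        rw [card_product, card_powersetCard, card_powersetCard, card_compl]

theorem card_filter_four_mul_hammingDist_lt_le (c : ι → Bool) {l t : ℕ}
    (hc : #(trueSupport c) = l) (hlt : l ≤ 8 * (t + 1)) (htl : 2 * t ≤ l)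
    (htn : 2 * t ≤ Fintype.card ι - l) :
    #{s : ι → Bool | #(trueSupport s) = l ∧ 4 * hammingDist c s < l}
      ≤ (t + 1) * ((Fintype.card ι - l).choose t * l.choose t) := by
  calc _ ≤ #{s : ι → Bool | #(trueSupport s) = #(trueSupport c) ∧
          #(trueSupport s \ trueSupport c) ≤ t} := by
        refine card_le_card fun s hs => ?_
        simp only [mem_filter, mem_univ, true_and] at hs ⊢
        have hsym := card_sdiff_comm (hs.1.trans hc.symm)
        rw [hammingDist_eq_card_sdiff_add_card_sdiff] at hs
        omega
    _ ≤ _ := card_filter_card_sdiff_trueSupport_le_sum c t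
    _ ≤ _ := by
        rw [hc]
        exact sum_range_choose_mul_choose_le htn htl

end GilbertVarshamov

open GilbertVarshamov in
/-- Gilbert–Varshamov bound for constant-weight binary codes: for integers `20 ≤ l ≤ k/2`
there exists a binary code `𝒞 ⊆ {0,1}^k` (bits encoded by `Bool`) of constant weight `l`,
minimum Hamming distance at least `l/4`, and size at least `(k/(2^{7/8} l))^{7l/8}`. -/
theorem gilbert_varshamov_constant_weight (l k : ℕ) (hl : 20 ≤ l) (hlk : 2 * l ≤ k) :
    ∃ 𝒞 : Finset (Fin k → Bool),
      (∀ c ∈ 𝒞, (Finset.univ.filter fun i => c i = true).card = l) ∧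
      (∀ c ∈ 𝒞, ∀ c' ∈ 𝒞, c ≠ c' → (l : ℝ) / 4 ≤ (hammingDist c c' : ℝ)) ∧
      ((k : ℝ) / ((2 : ℝ) ^ ((7 : ℝ) / 8) * l)) ^ ((7 * (l : ℝ)) / 8) ≤ (𝒞.card : ℝ) := by
  set t := (l - 1) / 8
  obtain ⟨𝒞, h𝒞, hfar, hcard⟩ := exists_pairwise_card_le_card_mul
    {c : Fin k → Bool | #(trueSupport c) = l} (fun c c' => l ≤ 4 * hammingDist c c')
    (fun c c' h => hammingDist_comm c c' ▸ h) (fun c => by simp; omega)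
    ((t + 1) * ((k - l).choose t * l.choose t)) fun c hc => by
      simpa [filter_filter, Fintype.card_fin] using card_filter_four_mul_hammingDist_lt_le c
        (mem_filter.1 hc).2 (by omega) (by omega) (by simp; omega)
  rw [card_filter_card_trueSupport_eq, Fintype.card_fin] at hcard
  refine ⟨𝒞, fun c hc => (mem_filter.1 (h𝒞 hc)).2, fun c hc c' hc' hne => ?_, ?_⟩
  · have := hfar hc hc' hne
    rw [div_le_iff₀ four_pos]
    exact_mod_cast (by omega : l ≤ hammingDist c c' * 4)
  · have hV : (0 : ℝ) < (t + 1) * ((k - l).choose t * l.choose t) := by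
      have := Nat.choose_pos (by omega : t ≤ k - l)
      have := Nat.choose_pos (by omega : t ≤ l)
      positivity
    refine le_of_mul_le_mul_right ?_ hV
    calc _ = _ * _ := mul_comm _ _
      _ ≤ (k.choose l : ℝ) := succ_mul_choose_mul_choose_mul_le_choose hl hlk (by omega)
      _ ≤ _ := by exact_mod_cast hcard
end

section
/- Sample complexity lower bound for ε-DP k-ary distribution estimation under total variation distance: There exists a universal constant c > 0 such that for every integer k ≥ 40, every α with 0 < α < 1/48, every ε > 0, and every n: if there exists an ε-differentially private Markov kernel θ̂ from ([k])^n to Δ_k such that for every p ∈ Δ_k, E_{X∼p^{⊗n}} E_{Q∼θ̂(X)}[d_TV(Q, p)] ≤ α, then n ≥ c·(k/α² + k/(αε)). -/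
open MeasureTheory ProbabilityTheory ENNReal

/-- `(ε, δ)`-differential privacy for a kernel from `𝒳^n` to `Θ`. -/
def IsDP {𝒳 Θ : Type*} [MeasurableSpace 𝒳] [MeasurableSpace Θ] {n : ℕ}
    (M : Kernel (Fin n → 𝒳) Θ) (ε δ : ℝ) : Prop :=
  ∀ x y : Fin n → 𝒳, ham x y ≤ 1 → ∀ S : Set Θ, MeasurableSet S →
    M x S ≤ ENNReal.ofReal (Real.exp ε) * M y S + ENNReal.ofReal δ

/-- The simplex `Δ_k` of probability vectors on `[k]`. -/
def simplex (k : ℕ) : Type := {p : Fin k → ℝ // p ∈ stdSimplex ℝ (Fin k)}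

noncomputable instance (k : ℕ) : MeasurableSpace (simplex k) :=
  Subtype.instMeasurableSpace

/-- The probability measure on `Fin k` associated to a probability vector. -/
noncomputable def discMeasure {k : ℕ} (p : Fin k → ℝ) : Measure (Fin k) :=
  ∑ i, ENNReal.ofReal (p i) • Measure.dirac i

/-- `n` i.i.d. samples from the distribution with probability vector `p`. -/
noncomputable def iidSamples {k : ℕ} (n : ℕ) (p : Fin k → ℝ) : Measure (Fin n → Fin k) :=
  Measure.pi fun _ : Fin n => discMeasure p

/-- Total variation distance between `k`-ary probability vectors:
`(1/2) Σ_x |p(x) − q(x)|`. -/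
noncomputable def tvVec {k : ℕ} (p q : Fin k → ℝ) : ℝ := (∑ x, |p x - q x|) / 2

/-- `ℓ₂` distance between `k`-ary probability vectors. -/
noncomputable def l2Vec {k : ℕ} (p q : Fin k → ℝ) : ℝ := Real.sqrt (∑ x, (p x - q x) ^ 2)

/-!
Assouad's method. Perturb the uniform distribution by `±δ/k` on `k/2` disjoint pairs of
symbols, `δ = 9α`; this gives a hypercube of distributions `p_u` indexed by sign vectors `u`.
Reading off, for each pair, which of its two symbols the estimate favours gives `k/2` tests.
An `α`-accurate estimator makes at most `αk/δ = k/9` of them wrong on average, whereas if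
neighbouring vertices `p_u`, `p_{u'}` (differing on one pair) could not be told apart with
advantage more than `1/2`, the average number of wrong tests would be at least about `k/8`.
Neighbours are close: `∑ p_u²/p_{u'} ≤ 1 + 9δ²/k` and `‖p_u - p_{u'}‖₁ = 4δ/k`.
Without privacy, the advantage on `n` samples is at most `½ √((∑ p²/q)ⁿ - 1)`, which
forces `n ≳ k/α²`. Under `ε`-DP, replacing the samples one at a time (a hybrid argument)
bounds the advantage by `n (e^ε - 1) ‖p - q‖₁`, which forces `n ≳ k/(αε)`.
-/

section IidWeight

variable {α : Type*} {n : ℕ}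

noncomputable def iidWeight (p : α → ℝ) (x : Fin n → α) : ℝ := ∏ i, p (x i)

lemma iidWeight_nonneg {p : α → ℝ} (hp : ∀ a, 0 ≤ p a) (x : Fin n → α) :
    0 ≤ iidWeight p x :=
  Finset.prod_nonneg fun i _ => hp (x i)

lemma iidWeight_pos {p : α → ℝ} (hp : ∀ a, 0 < p a) (x : Fin n → α) : 0 < iidWeight p x :=
  Finset.prod_pos fun i _ => hp (x i)

lemma iidWeight_cons (p : α → ℝ) (a : α) (y : Fin n → α) :
    iidWeight p (Fin.cons a y : Fin (n + 1) → α) = p a * iidWeight p y := by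
  simp [iidWeight, Fin.prod_univ_succ]

lemma sum_iidWeight [Fintype α] (p : α → ℝ) : ∑ x : Fin n → α, iidWeight p x = (∑ a, p a) ^ n :=
  (Fintype.sum_pow p n).symm

lemma sum_iidWeight_eq_one [Fintype α] {p : α → ℝ} (hp : ∑ a, p a = 1) :
    ∑ x : Fin n → α, iidWeight p x = 1 := by
  rw [sum_iidWeight, hp, one_pow]

lemma sum_iidWeight_sq_div [Fintype α] (p q : α → ℝ) :
    ∑ x : Fin n → α, iidWeight p x ^ 2 / iidWeight q x = (∑ a, p a ^ 2 / q a) ^ n := by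
  simp only [Fintype.sum_pow, iidWeight, ← Finset.prod_pow, ← Finset.prod_div_distrib]

lemma Fin.sum_univ_pi_succ [Fintype α] {M : Type*} [AddCommMonoid M] (F : (Fin (n + 1) → α) → M) :
    ∑ x, F x = ∑ a, ∑ y : Fin n → α, F (Fin.cons a y) := by
  rw [← (Fin.consEquiv fun _ => α).sum_comp, Fintype.sum_prod_type]
  rfl

end IidWeight

section SignedWeights

variable {β : Type*} [Fintype β]

lemma abs_sum_sub_mul_le {p q h : β → ℝ} (hpq : ∑ b, p b = ∑ b, q b) {c L : ℝ}
    (hh : ∀ b, |h b - c| ≤ L) : |∑ b, (p b - q b) * h b| ≤ L * ∑ b, |p b - q b| := by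
  have hcenter : ∑ b, (p b - q b) * h b = ∑ b, (p b - q b) * (h b - c) := by
    simp only [mul_sub, Finset.sum_sub_distrib, ← Finset.sum_mul, hpq, sub_self, zero_mul,
      sub_zero]
  rw [hcenter, Finset.mul_sum]
  refine (Finset.abs_sum_le_sum_abs _ _).trans (Finset.sum_le_sum fun b _ => ?_)
  rw [abs_mul, mul_comm L]
  exact mul_le_mul_of_nonneg_left (hh b) (abs_nonneg _)

lemma sum_sq_sub_div_eq {p q : β → ℝ} (hq : ∀ b, 0 < q b) (hp1 : ∑ b, p b = 1)
    (hq1 : ∑ b, q b = 1) : ∑ b, (p b - q b) ^ 2 / q b = ∑ b, p b ^ 2 / q b - 1 := by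
  have hterm : ∀ b, (p b - q b) ^ 2 / q b = p b ^ 2 / q b - 2 * p b + q b := fun b => by
    field_simp [(hq b).ne']
    ring
  simp only [hterm, Finset.sum_add_distrib, Finset.sum_sub_distrib, ← Finset.mul_sum, hp1, hq1]
  ring

lemma sum_abs_sub_le_sqrt {p q : β → ℝ} (hq : ∀ b, 0 < q b) (hp1 : ∑ b, p b = 1)
    (hq1 : ∑ b, q b = 1) : ∑ b, |p b - q b| ≤ Real.sqrt (∑ b, p b ^ 2 / q b - 1) := by
  have hcs := Finset.sq_sum_div_le_sum_sq_div Finset.univ (fun b => |p b - q b|)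
    fun b _ => hq b
  simp only [hq1, div_one, sq_abs, sum_sq_sub_div_eq hq hp1 hq1] at hcs
  exact Real.le_sqrt_of_sq_le hcs

end SignedWeights

section Hybrid

variable {α : Type*} [Fintype α] {p q : α → ℝ}

lemma abs_sum_iidWeight_sub_mul_le (hp : ∀ a, 0 ≤ p a) (hq : ∀ a, 0 ≤ q a)
    (hp1 : ∑ a, p a = 1) (hq1 : ∑ a, q a = 1) {L : ℝ} :
    ∀ {n : ℕ} (G : (Fin n → α) → ℝ), (∀ x i a, |G (Function.update x i a) - G x| ≤ L) →
      |∑ x, (iidWeight p x - iidWeight q x) * G x| ≤ n * L * ∑ a, |p a - q a|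
  | 0, G, _ => by simp [iidWeight]
  | m + 1, G, hG => by
    -- peel off the first sample: `p^{m+1} - q^{m+1} = p ⊗ (p^m - q^m) + (p - q) ⊗ q^m`
    set h : α → ℝ := fun a => ∑ y, iidWeight q y * G (Fin.cons a y)
    have hsplit : ∑ x, (iidWeight p x - iidWeight q x) * G x
        = ∑ a, p a * ∑ y, (iidWeight p y - iidWeight q y) * G (Fin.cons a y)
          + ∑ a, (p a - q a) * h a := by
      simp only [Fin.sum_univ_pi_succ, iidWeight_cons, h, Finset.mul_sum,
        ← Finset.sum_add_distrib]
      exact Fintype.sum_congr _ _ fun a => Fintype.sum_congr _ _ fun y => by ring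
    have hfirst : |∑ a, p a * ∑ y, (iidWeight p y - iidWeight q y) * G (Fin.cons a y)|
        ≤ m * L * ∑ a, |p a - q a| := by
      refine (Finset.abs_sum_le_sum_abs _ _).trans ?_
      calc ∑ a, |p a * ∑ y, (iidWeight p y - iidWeight q y) * G (Fin.cons a y)|
          ≤ ∑ a, p a * (m * L * ∑ b, |p b - q b|) := by
            refine Finset.sum_le_sum fun a _ => ?_
            rw [abs_mul, abs_of_nonneg (hp a)]
            refine mul_le_mul_of_nonneg_left
              (abs_sum_iidWeight_sub_mul_le hp hq hp1 hq1 _ fun y i b => ?_) (hp a)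
            simpa only [Fin.cons_update] using hG (Fin.cons a y) i.succ b
        _ = m * L * ∑ b, |p b - q b| := by rw [← Finset.sum_mul, hp1, one_mul]
    have hh : ∀ a b, |h a - h b| ≤ L := fun a b => by
      calc |h a - h b| = |∑ y, iidWeight q y * (G (Fin.cons a y) - G (Fin.cons b y))| := by
            simp only [h, mul_sub, Finset.sum_sub_distrib]
        _ ≤ ∑ y, iidWeight q y * L := by
            refine (Finset.abs_sum_le_sum_abs _ _).trans (Finset.sum_le_sum fun y _ => ?_)
            rw [abs_mul, abs_of_nonneg (iidWeight_nonneg hq y)]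
            refine mul_le_mul_of_nonneg_left ?_ (iidWeight_nonneg hq y)
            simpa only [Fin.update_cons_zero] using hG (Fin.cons b y) 0 a
        _ = L := by rw [← Finset.sum_mul, sum_iidWeight_eq_one hq1, one_mul]
    obtain ⟨c, hc⟩ : ∃ c, ∀ a, |h a - c| ≤ L := by
      rcases isEmpty_or_nonempty α with hα | ⟨⟨a₀⟩⟩
      · exact ⟨0, fun a => isEmptyElim a⟩
      · exact ⟨h a₀, fun a => hh a a₀⟩
    have hsecond := abs_sum_sub_mul_le (hp1.trans hq1.symm) hc
    rw [hsplit]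
    refine (abs_add_le _ _).trans ((add_le_add hfirst hsecond).trans_eq ?_)
    push_cast
    ring

end Hybrid

section Sampling

variable {k n : ℕ}

instance (p : Fin k → ℝ) : IsFiniteMeasure (discMeasure p) :=
  ⟨by simp [discMeasure, ENNReal.sum_lt_top]⟩

lemma discMeasure_singleton (p : Fin k → ℝ) (a : Fin k) :
    discMeasure p {a} = ENNReal.ofReal (p a) := by
  simp [discMeasure, Measure.dirac_apply', Set.indicator_apply, eq_comm]

lemma iidSamples_singleton {p : Fin k → ℝ} (hp : ∀ a, 0 ≤ p a) (x : Fin n → Fin k) :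
    iidSamples n p {x} = ENNReal.ofReal (iidWeight p x) := by
  rw [iidSamples, ← Set.univ_pi_singleton, Measure.pi_pi, iidWeight,
    ENNReal.ofReal_prod_of_nonneg fun i _ => hp (x i)]
  simp only [discMeasure_singleton]

variable {Θ : Type*} [MeasurableSpace Θ]

noncomputable def acceptProb (M : Kernel (Fin n → Fin k) Θ) (p : Fin k → ℝ) (A : Set Θ) : ℝ :=
  ∑ x, iidWeight p x * (M x A).toReal

lemma acceptProb_nonneg (M : Kernel (Fin n → Fin k) Θ) {p : Fin k → ℝ} (hp : ∀ a, 0 ≤ p a)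
    (A : Set Θ) : 0 ≤ acceptProb M p A :=
  Finset.sum_nonneg fun x _ => mul_nonneg (iidWeight_nonneg hp x) toReal_nonneg

lemma lintegral_kernel_iidSamples (M : Kernel (Fin n → Fin k) Θ) [IsFiniteKernel M]
    {p : Fin k → ℝ} (hp : ∀ a, 0 ≤ p a) (A : Set Θ) :
    ∫⁻ x, M x A ∂(iidSamples n p) = ENNReal.ofReal (acceptProb M p A) := by
  rw [lintegral_fintype, acceptProb,
    ENNReal.ofReal_sum_of_nonneg fun x _ => mul_nonneg (iidWeight_nonneg hp x) toReal_nonneg]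
  refine Fintype.sum_congr _ _ fun x => ?_
  rw [iidSamples_singleton hp, ENNReal.ofReal_mul (iidWeight_nonneg hp x),
    ENNReal.ofReal_toReal (measure_ne_top _ _), mul_comm]

end Sampling

section AcceptProb

variable {k n : ℕ} {Θ : Type*} [MeasurableSpace Θ] (M : Kernel (Fin n → Fin k) Θ)
  [IsMarkovKernel M]

lemma acceptProb_compl {p : Fin k → ℝ} (hp1 : ∑ a, p a = 1) {A : Set Θ}
    (hA : MeasurableSet A) : acceptProb M p Aᶜ = 1 - acceptProb M p A := by
  have hcompl : ∀ x, (M x Aᶜ).toReal = 1 - (M x A).toReal := fun x => by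
    rw [prob_compl_eq_one_sub hA, ENNReal.toReal_sub_of_le prob_le_one one_ne_top, toReal_one]
  simp only [acceptProb, hcompl, mul_sub, mul_one, Finset.sum_sub_distrib,
    sum_iidWeight_eq_one hp1]

omit [IsMarkovKernel M] in
lemma acceptProb_sub (p q : Fin k → ℝ) (A : Set Θ) :
    acceptProb M p A - acceptProb M q A
      = ∑ x, (iidWeight p x - iidWeight q x) * (M x A).toReal := by
  simp only [acceptProb, ← Finset.sum_sub_distrib, sub_mul]

lemma abs_acceptProb_sub_le_sqrt {p q : Fin k → ℝ} (hq : ∀ a, 0 < q a)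
    (hp1 : ∑ a, p a = 1) (hq1 : ∑ a, q a = 1) (A : Set Θ) :
    |acceptProb M p A - acceptProb M q A| ≤ Real.sqrt ((∑ a, p a ^ 2 / q a) ^ n - 1) / 2 := by
  have hsum : ∑ x : Fin n → Fin k, iidWeight p x = ∑ x : Fin n → Fin k, iidWeight q x := by
    rw [sum_iidWeight_eq_one hp1, sum_iidWeight_eq_one hq1]
  have hhalf : ∀ x, |(M x A).toReal - 1 / 2| ≤ 1 / 2 := fun x => by
    have h1 : (M x A).toReal ≤ 1 := toReal_le_of_le_ofReal zero_le_one (by simp [prob_le_one])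
    exact abs_le.2 ⟨by linarith [(M x A).toReal_nonneg], by linarith⟩
  rw [acceptProb_sub, ← sum_iidWeight_sq_div, div_eq_inv_mul, ← one_div]
  exact (abs_sum_sub_mul_le hsum hhalf).trans <| mul_le_mul_of_nonneg_left
    (sum_abs_sub_le_sqrt (iidWeight_pos hq) (sum_iidWeight_eq_one hp1)
      (sum_iidWeight_eq_one hq1)) (by norm_num)

end AcceptProb

section Privacy

variable {𝒳 : Type*} {n : ℕ}

lemma ham_comm (x y : Fin n → 𝒳) : ham x y = ham y x := by
  classical
  exact hammingDist_comm x y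

lemma ham_update_le_one (x : Fin n → 𝒳) (i : Fin n) (a : 𝒳) :
    ham x (Function.update x i a) ≤ 1 := by
  have hi : ∀ j, x j ≠ Function.update x i a j → j = i := fun j hj => by
    by_contra hji
    exact hj (Function.update_of_ne hji a x).symm
  refine Finset.card_le_one.2 fun j hj j' hj' => ?_
  simp only [Finset.mem_filter, Finset.mem_univ, true_and] at hj hj'
  rw [hi j hj, hi j' hj']

variable [MeasurableSpace 𝒳] {Θ : Type*} [MeasurableSpace Θ] {M : Kernel (Fin n → 𝒳) Θ}
  {ε : ℝ} {A : Set Θ}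

lemma IsDP.toReal_le [IsFiniteKernel M] (hM : IsDP M ε 0) {x y : Fin n → 𝒳}
    (hxy : ham x y ≤ 1) (hA : MeasurableSet A) :
    (M x A).toReal ≤ Real.exp ε * (M y A).toReal := by
  have h := hM x y hxy A hA
  rw [ENNReal.ofReal_zero, add_zero] at h
  simpa [ENNReal.toReal_mul, (Real.exp_pos ε).le] using
    ENNReal.toReal_mono (mul_ne_top ofReal_ne_top (measure_ne_top _ _)) h

lemma IsDP.abs_toReal_update_sub_le [IsMarkovKernel M] (hM : IsDP M ε 0) (hε : 0 ≤ ε)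
    (hA : MeasurableSet A) (x : Fin n → 𝒳) (i : Fin n) (a : 𝒳) :
    |(M (Function.update x i a) A).toReal - (M x A).toReal| ≤ Real.exp ε - 1 := by
  have hxy := ham_update_le_one x i a
  have h₁ := hM.toReal_le hxy hA
  have h₂ := hM.toReal_le ((ham_comm _ _).trans_le hxy) hA
  have hle : ∀ y, (M y A).toReal ≤ 1 := fun y =>
    toReal_le_of_le_ofReal zero_le_one (by simp [prob_le_one])
  have hexp := Real.one_le_exp hε
  rw [abs_sub_le_iff]
  constructor <;> nlinarith [hle x, hle (Function.update x i a)]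

end Privacy

lemma IsDP.abs_acceptProb_sub_le {k n : ℕ} {Θ : Type*} [MeasurableSpace Θ]
    {M : Kernel (Fin n → Fin k) Θ} [IsMarkovKernel M] {ε : ℝ} (hM : IsDP M ε 0) (hε : 0 ≤ ε)
    {A : Set Θ} (hA : MeasurableSet A) {p q : Fin k → ℝ} (hp : p ∈ stdSimplex ℝ (Fin k))
    (hq : q ∈ stdSimplex ℝ (Fin k)) :
    |acceptProb M p A - acceptProb M q A| ≤ n * (Real.exp ε - 1) * ∑ a, |p a - q a| := by
  rw [acceptProb_sub]
  exact abs_sum_iidWeight_sub_mul_le hp.1 hq.1 hp.2 hq.2 _ (hM.abs_toReal_update_sub_le hε hA)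

section FlipAt

variable {ι : Type*} [DecidableEq ι]

def flipAt (u : ι → Bool) (j : ι) : ι → Bool := Function.update u j (!u j)

@[simp] lemma flipAt_self (u : ι → Bool) (j : ι) : flipAt u j j = !u j :=
  Function.update_self _ _ _

lemma flipAt_of_ne (u : ι → Bool) {i j : ι} (h : i ≠ j) : flipAt u j i = u i :=
  Function.update_of_ne h _ _

lemma flipAt_involutive (j : ι) : Function.Involutive fun u : ι → Bool => flipAt u j := by
  intro u
  ext i
  rcases eq_or_ne i j with rfl | h
  · simp
  · simp [flipAt_of_ne _ h]

lemma card_mul_one_sub_le_of_flipAt [Fintype ι] (a : (ι → Bool) → ι → ℝ) {B D : ℝ}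
    (hB : ∀ u, ∑ j, a u j ≤ B) (hD : ∀ u j, 1 - D ≤ a u j + a (flipAt u j) j) :
    Fintype.card ι * (1 - D) ≤ 2 * B := by
  have hflip : ∀ j, ∑ u, a (flipAt u j) j = ∑ u, a u j := fun j =>
    Equiv.sum_comp (flipAt_involutive j).toPerm fun u => a u j
  have hC : (0 : ℝ) < Fintype.card (ι → Bool) := by exact_mod_cast Fintype.card_pos
  refine le_of_mul_le_mul_left ?_ hC
  calc (Fintype.card (ι → Bool) : ℝ) * (Fintype.card ι * (1 - D))
      = ∑ u : ι → Bool, ∑ j, (1 - D) := by simp [mul_sub]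
    _ ≤ ∑ u, ∑ j, (a u j + a (flipAt u j) j) :=
        Finset.sum_le_sum fun u _ => Finset.sum_le_sum fun j _ => hD u j
    _ = 2 * ∑ u, ∑ j, a u j := by
        rw [Finset.sum_comm]
        simp only [Finset.sum_add_distrib, hflip]
        rw [Finset.sum_comm]
        ring
    _ ≤ Fintype.card (ι → Bool) * (2 * B) := by
        rw [mul_left_comm, ← nsmul_eq_mul, ← Finset.card_univ, ← Finset.sum_const]
        exact mul_le_mul_of_nonneg_left (Finset.sum_le_sum fun u _ => hB u) zero_le_two

end FlipAt

section Cube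

variable {α ι : Type*} [Fintype α] (e : ι × Bool ↪ α)

/-- On each pair `e (j, ·)` the vertex `u` moves mass `δ / |α|` from `e (j, !u j)` to
`e (j, u j)`; off the range of `e` it is uniform. -/
noncomputable def cubeVec (δ : ℝ) (u : ι → Bool) (a : α) : ℝ :=
  (1 + Function.extend e (fun c => if c.2 = u c.1 then δ else -δ) 0 a) / Fintype.card α

lemma cubeVec_apply_self (δ : ℝ) (u : ι → Bool) (j : ι) :
    cubeVec e δ u (e (j, u j)) = (1 + δ) / Fintype.card α := by
  simp [cubeVec, e.injective.extend_apply]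

lemma cubeVec_apply_not (δ : ℝ) (u : ι → Bool) (j : ι) :
    cubeVec e δ u (e (j, !u j)) = (1 - δ) / Fintype.card α := by
  simp [cubeVec, e.injective.extend_apply, sub_eq_add_neg]

lemma cubeVec_pos [Nonempty α] {δ : ℝ} (hδ : |δ| < 1) (u : ι → Bool) (a : α) :
    0 < cubeVec e δ u a := by
  have hδ' := abs_lt.1 hδ
  refine div_pos ?_ (by exact_mod_cast Fintype.card_pos)
  by_cases ha : ∃ c, e c = a
  · obtain ⟨c, rfl⟩ := ha
    rw [e.injective.extend_apply]
    split_ifs <;> linarith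
  · rw [Function.extend_apply' _ _ _ ha]
    simp

lemma sum_cubeVec [Fintype ι] [Nonempty α] (δ : ℝ) (u : ι → Bool) :
    ∑ a, cubeVec e δ u a = 1 := by
  simp only [cubeVec, ← Finset.sum_div, Finset.sum_add_distrib]
  set d : ι × Bool → ℝ := fun c => if c.2 = u c.1 then δ else -δ
  have hpert : ∑ a, Function.extend e d 0 a = 0 := by
    rw [← Fintype.sum_of_injective e e.injective d (Function.extend e d 0)
      (fun a ha => Function.extend_apply' _ _ _ fun ⟨c, hc⟩ => ha ⟨c, hc⟩)
      fun c => (e.injective.extend_apply _ _ c).symm, Fintype.sum_prod_type]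
    refine Finset.sum_eq_zero fun j _ => ?_
    cases h : u j <;> simp [d, h]
  have hcard : (Fintype.card α : ℝ) ≠ 0 := by exact_mod_cast Fintype.card_ne_zero
  simp [hpert, hcard]

lemma cubeVec_mem_stdSimplex [Fintype ι] [Nonempty α] {δ : ℝ} (hδ : |δ| < 1)
    (u : ι → Bool) : cubeVec e δ u ∈ stdSimplex ℝ α :=
  ⟨fun a => (cubeVec_pos e hδ u a).le, sum_cubeVec e δ u⟩

lemma cubeVec_flipAt_of_ne [DecidableEq ι] (δ : ℝ) (u : ι → Bool) {j : ι} {a : α}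
    (h₁ : a ≠ e (j, u j)) (h₂ : a ≠ e (j, !u j)) :
    cubeVec e δ (flipAt u j) a = cubeVec e δ u a := by
  by_cases ha : ∃ c, e c = a
  · obtain ⟨⟨i, b⟩, rfl⟩ := ha
    have hij : i ≠ j := by
      rintro rfl
      cases b <;> cases hu : u i <;> simp_all
    simp [cubeVec, e.injective.extend_apply, flipAt_of_ne u hij]
  · simp [cubeVec, Function.extend_apply' _ _ _ ha]

end Cube

section CubePairs

variable {α ι : Type*} [Fintype α] [DecidableEq ι] (e : ι × Bool ↪ α)

lemma sum_cubeVec_flipAt (G : ℝ → ℝ → ℝ) (hG : ∀ t, G t t = 0) (δ : ℝ) (u : ι → Bool)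
    (j : ι) :
    ∑ a, G (cubeVec e δ u a) (cubeVec e δ (flipAt u j) a)
      = G ((1 + δ) / Fintype.card α) ((1 - δ) / Fintype.card α)
        + G ((1 - δ) / Fintype.card α) ((1 + δ) / Fintype.card α) := by
  have hne : e (j, u j) ≠ e (j, !u j) := fun h => by simpa using e.injective h
  have h₁ : cubeVec e δ (flipAt u j) (e (j, u j)) = (1 - δ) / Fintype.card α := by
    simpa using cubeVec_apply_not e δ (flipAt u j) j
  have h₂ : cubeVec e δ (flipAt u j) (e (j, !u j)) = (1 + δ) / Fintype.card α := by
    simpa using cubeVec_apply_self e δ (flipAt u j) j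
  rw [Fintype.sum_eq_add _ _ hne fun a ha => by rw [cubeVec_flipAt_of_ne e δ u ha.1 ha.2, hG],
    cubeVec_apply_self, cubeVec_apply_not, h₁, h₂]

lemma sum_abs_cubeVec_sub_flipAt (δ : ℝ) (u : ι → Bool) (j : ι) :
    ∑ a, |cubeVec e δ u a - cubeVec e δ (flipAt u j) a| = 4 * |δ| / Fintype.card α := by
  rw [sum_cubeVec_flipAt e (fun s t => |s - t|) (by simp), abs_sub_comm ((1 - δ) / _),
    ← two_mul, ← sub_div, abs_div, Nat.abs_cast, add_sub_sub_cancel, ← two_mul, abs_mul,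
    abs_two]
  ring

lemma sum_sq_cubeVec_div_flipAt_le [Fintype ι] [Nonempty α] {δ : ℝ} (hδ : 9 * δ ^ 2 ≤ 1)
    (u : ι → Bool) (j : ι) :
    ∑ a, cubeVec e δ u a ^ 2 / cubeVec e δ (flipAt u j) a ≤ 1 + 9 * δ ^ 2 / Fintype.card α := by
  have hδ1 : |δ| < 1 := abs_lt.2 ⟨by nlinarith, by nlinarith⟩
  have hchi := sum_sq_sub_div_eq (cubeVec_pos e hδ1 (flipAt u j)) (sum_cubeVec e δ u)
    (sum_cubeVec e δ (flipAt u j))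
  rw [sum_cubeVec_flipAt e (fun s t => (s - t) ^ 2 / t) (by simp)] at hchi
  set N : ℝ := (Fintype.card α : ℝ)
  have hN : 0 < N := Nat.cast_pos.2 Fintype.card_pos
  have hpair : ((1 + δ) / N - (1 - δ) / N) ^ 2 / ((1 - δ) / N)
      + ((1 - δ) / N - (1 + δ) / N) ^ 2 / ((1 + δ) / N) = 8 * δ ^ 2 / (N * (1 - δ ^ 2)) := by
    have : 1 - δ ≠ 0 := by linarith [abs_lt.1 hδ1]
    have : 1 + δ ≠ 0 := by linarith [abs_lt.1 hδ1]
    have : 1 - δ ^ 2 ≠ 0 := by nlinarith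
    field_simp
    ring
  have hgap : 8 * δ ^ 2 / (N * (1 - δ ^ 2)) ≤ 9 * δ ^ 2 / N := by
    rw [div_le_div_iff₀ (by nlinarith) hN]
    nlinarith [mul_nonneg (mul_nonneg (sq_nonneg δ) hN.le) (sub_nonneg.2 hδ)]
  linarith

end CubePairs

section CubeTest

variable {α ι : Type*} (e : ι × Bool ↪ α)

noncomputable def cubeTest (j : ι) (q : α → ℝ) : Bool :=
  decide (q (e (j, false)) < q (e (j, true)))

lemma le_of_cubeTest_ne {j : ι} {q : α → ℝ} {b : Bool} (h : cubeTest e j q ≠ b) :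
    q (e (j, b)) ≤ q (e (j, !b)) := by
  cases b <;> simp [cubeTest] at h ⊢ <;> linarith

lemma sum_ite_cubeTest_ne_le [Fintype α] [Fintype ι] (δ : ℝ) (u : ι → Bool)
    (q : α → ℝ) :
    ∑ j, (if cubeTest e j q ≠ u j then δ / Fintype.card α else 0)
      ≤ (∑ a, |q a - cubeVec e δ u a|) / 2 := by
  set p := cubeVec e δ u with hp
  have hpair : ∀ j, 2 * (if cubeTest e j q ≠ u j then δ / Fintype.card α else 0)
      ≤ ∑ b, |q (e (j, b)) - p (e (j, b))| := fun j => by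
    have hsplit : ∑ b, |q (e (j, b)) - p (e (j, b))|
        = |q (e (j, u j)) - p (e (j, u j))| + |q (e (j, !u j)) - p (e (j, !u j))| := by
      cases u j <;> simp [add_comm]
    rw [hsplit]
    split_ifs with h
    · have hgap : 2 * (δ / Fintype.card α) = p (e (j, u j)) - p (e (j, !u j)) := by
        rw [hp, cubeVec_apply_self, cubeVec_apply_not]
        ring
      linarith [le_of_cubeTest_ne e h, neg_abs_le (q (e (j, u j)) - p (e (j, u j))),
        le_abs_self (q (e (j, !u j)) - p (e (j, !u j)))]
    · rw [mul_zero]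
      positivity
  have hembed : ∑ c, |q (e c) - p (e c)| ≤ ∑ a, |q a - p a| :=
    (Finset.sum_map _ e fun a => |q a - p a|).symm.trans_le
      (Finset.sum_le_univ_sum_of_nonneg fun a => abs_nonneg _)
  rw [Fintype.sum_prod_type] at hembed
  rw [le_div_iff₀ two_pos, Finset.sum_mul]
  exact (Finset.sum_le_sum fun j _ => by rw [mul_comm]; exact hpair j).trans hembed

end CubeTest

def IsTVAccurate {k n : ℕ} (est : Kernel (Fin n → Fin k) (simplex k)) (α : ℝ) : Prop :=
  ∀ p : simplex k,
    ∫⁻ x, ∫⁻ q, ENNReal.ofReal (tvVec q.1 p.1) ∂(est x) ∂(iidSamples n p.1) ≤ ENNReal.ofReal α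

section Assouad

variable {k n : ℕ} {ι : Type*} (e : ι × Bool ↪ Fin k)

def mismatchSet (u : ι → Bool) (j : ι) : Set (simplex k) := {q | cubeTest e j q.1 ≠ u j}

lemma measurableSet_mismatchSet (u : ι → Bool) (j : ι) : MeasurableSet (mismatchSet e u j) := by
  have hcoord : ∀ i, Measurable fun q : simplex k => q.1 i := fun i =>
    (measurable_pi_apply i).comp measurable_subtype_coe
  cases h : u j
  · simpa [mismatchSet, cubeTest, h] using measurableSet_lt (hcoord _) (hcoord _)
  · simpa [mismatchSet, cubeTest, h] using measurableSet_le (hcoord _) (hcoord _)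

lemma mismatchSet_flipAt [DecidableEq ι] (u : ι → Bool) (j : ι) :
    mismatchSet e (flipAt u j) j = (mismatchSet e u j)ᶜ := by
  ext q
  simp [mismatchSet]

lemma mul_sum_acceptProb_mismatchSet_le [Fintype ι] [NeZero k]
    (est : Kernel (Fin n → Fin k) (simplex k)) [IsMarkovKernel est] {δ α : ℝ} (hδ0 : 0 ≤ δ)
    (hδ1 : δ < 1) (hα : 0 ≤ α)
    (hacc : IsTVAccurate est α)
    (u : ι → Bool) :
    δ / k * ∑ j, acceptProb est (cubeVec e δ u) (mismatchSet e u j) ≤ α := by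
  have hmem := cubeVec_mem_stdSimplex e (abs_lt.2 ⟨by linarith, hδ1⟩) u
  have hc : 0 ≤ δ / k := by positivity
  have hM := measurableSet_mismatchSet e u
  have hpoint : ∀ q : simplex k,
      ∑ j, (mismatchSet e u j).indicator (fun _ => ENNReal.ofReal (δ / k)) q
        ≤ ENNReal.ofReal (tvVec q.1 (cubeVec e δ u)) := fun q => by
    have hind : ∀ j, (mismatchSet e u j).indicator (fun _ => ENNReal.ofReal (δ / k)) q
        = ENNReal.ofReal (if cubeTest e j q.1 ≠ u j then δ / k else 0) := fun j => by
      by_cases h : cubeTest e j q.1 ≠ u j <;> simp [mismatchSet, h]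
    simp only [hind]
    rw [← ENNReal.ofReal_sum_of_nonneg fun j _ => by positivity]
    exact ENNReal.ofReal_le_ofReal (by simpa [tvVec] using sum_ite_cubeTest_ne_le e δ u q.1)
  rw [← ENNReal.ofReal_le_ofReal_iff hα]
  calc ENNReal.ofReal (δ / k * ∑ j, acceptProb est (cubeVec e δ u) (mismatchSet e u j))
      = ∫⁻ x, ∫⁻ q, ∑ j, (mismatchSet e u j).indicator (fun _ => ENNReal.ofReal (δ / k)) q
          ∂(est x) ∂(iidSamples n (cubeVec e δ u)) := by
        simp_rw [lintegral_finsetSum _ fun j _ => measurable_const.indicator (hM j),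
          lintegral_indicator_const (hM _)]
        rw [lintegral_finsetSum _ fun j _ => (est.measurable_coe (hM j)).const_mul _]
        simp_rw [lintegral_const_mul _ (est.measurable_coe (hM _)),
          lintegral_kernel_iidSamples est hmem.1]
        rw [Finset.mul_sum, ENNReal.ofReal_sum_of_nonneg fun j _ =>
          mul_nonneg hc (acceptProb_nonneg est hmem.1 _)]
        simp [ENNReal.ofReal_mul hc]
    _ ≤ ∫⁻ x, ∫⁻ q, ENNReal.ofReal (tvVec q.1 (cubeVec e δ u))
          ∂(est x) ∂(iidSamples n (cubeVec e δ u)) :=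
        lintegral_mono fun x => lintegral_mono fun q => hpoint q
    _ ≤ ENNReal.ofReal α := hacc ⟨_, hmem⟩

lemma card_mul_one_sub_le_of_accurate [Fintype ι] [DecidableEq ι] [NeZero k]
    (est : Kernel (Fin n → Fin k) (simplex k)) [IsMarkovKernel est] {δ α D : ℝ} (hδ0 : 0 < δ)
    (hδ1 : δ < 1) (hα : 0 ≤ α)
    (hacc : IsTVAccurate est α)
    (hD : ∀ u j, |acceptProb est (cubeVec e δ u) (mismatchSet e u j)
      - acceptProb est (cubeVec e δ (flipAt u j)) (mismatchSet e u j)| ≤ D) :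
    Fintype.card ι * (1 - D) ≤ 2 * (α * k / δ) := by
  refine card_mul_one_sub_le_of_flipAt
    (fun u j => acceptProb est (cubeVec e δ u) (mismatchSet e u j)) (fun u => ?_) fun u j => ?_
  · have h := mul_sum_acceptProb_mismatchSet_le e est hδ0.le hδ1 hα hacc u
    rw [div_mul_eq_mul_div, div_le_iff₀ (by exact_mod_cast Nat.pos_of_neZero k)] at h
    rw [le_div_iff₀ hδ0]
    linarith
  · rw [mismatchSet_flipAt, acceptProb_compl est (sum_cubeVec e δ _)
      (measurableSet_mismatchSet e u j)]
    linarith [(abs_le.1 (hD u j)).1]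

end Assouad

/-- The witnesses `p, q` are neighbouring vertices of the hypercube `cubeVec e (9 * α)` over
`k / 2` pairs, and `A` is one of the `mismatchSet`s. -/
lemma exists_far_pair_of_accurate {k n : ℕ} (est : Kernel (Fin n → Fin k) (simplex k))
    [IsMarkovKernel est] (hk : 10 ≤ k) {α : ℝ} (hα0 : 0 < α) (hα1 : α ≤ 1 / 27)
    (hacc : IsTVAccurate est α) :
    ∃ p q : Fin k → ℝ, p ∈ stdSimplex ℝ (Fin k) ∧ q ∈ stdSimplex ℝ (Fin k) ∧ (∀ a, 0 < q a) ∧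
      ∑ a, |p a - q a| = 36 * α / k ∧ ∑ a, p a ^ 2 / q a ≤ 1 + 729 * α ^ 2 / k ∧
      ∃ A, MeasurableSet A ∧ 1 / 2 < |acceptProb est p A - acceptProb est q A| := by
  have : NeZero k := ⟨by omega⟩
  obtain ⟨e⟩ : Nonempty (Fin (k / 2) × Bool ↪ Fin k) :=
    Function.Embedding.nonempty_of_card_le (by simp; omega)
  have hδ : |9 * α| < 1 := by rw [abs_of_pos (by positivity)]; linarith
  by_contra! hclose
  have hcube := card_mul_one_sub_le_of_accurate e est (D := 1 / 2) (by positivity)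
    (abs_lt.1 hδ).2 hα0.le hacc fun u j =>
    hclose _ _ (cubeVec_mem_stdSimplex e hδ u) (cubeVec_mem_stdSimplex e hδ _)
      (cubeVec_pos e hδ _)
      (by rw [sum_abs_cubeVec_sub_flipAt, abs_of_pos (by positivity)]; simp; ring)
      (by
        have := sum_sq_cubeVec_div_flipAt_le e (δ := 9 * α) (by nlinarith) u j
        simp only [Fintype.card_fin] at this
        exact this.trans_eq (by ring))
      _ (measurableSet_mismatchSet e u j)
  have hpairs : (k : ℝ) ≤ 2 * (k / 2 : ℕ) + 1 := by exact_mod_cast (by omega : k ≤ 2 * (k / 2) + 1)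
  have hk10 : (10 : ℝ) ≤ k := by exact_mod_cast hk
  rw [Fintype.card_fin, show α * k / (9 * α) = k / 9 by field_simp] at hcube
  linarith

section TwoPoint

variable {k n : ℕ} {Θ : Type*} [MeasurableSpace Θ] {M : Kernel (Fin n → Fin k) Θ}
  [IsMarkovKernel M] {p q : Fin k → ℝ} {A : Set Θ}

lemma log_two_lt_of_abs_acceptProb_sub (hp1 : ∑ a, p a = 1) (hq : ∀ a, 0 < q a)
    (hq1 : ∑ a, q a = 1) {t : ℝ} (hchi : ∑ a, p a ^ 2 / q a ≤ 1 + t)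
    (hfar : 1 / 2 < |acceptProb M p A - acceptProb M q A|) : Real.log 2 < n * t := by
  have hsqrt : 1 < Real.sqrt ((∑ a, p a ^ 2 / q a) ^ n - 1) := by
    linarith [hfar.trans_le (abs_acceptProb_sub_le_sqrt M hq hp1 hq1 A)]
  rw [Real.lt_sqrt zero_le_one] at hsqrt
  have hchi0 : 0 ≤ ∑ a, p a ^ 2 / q a :=
    Finset.sum_nonneg fun a _ => div_nonneg (sq_nonneg _) (hq a).le
  rw [Real.log_lt_iff_lt_exp two_pos, Real.exp_nat_mul]
  calc (2 : ℝ) < (∑ a, p a ^ 2 / q a) ^ n := by linarith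
    _ ≤ Real.exp t ^ n :=
        pow_le_pow_left₀ hchi0 (hchi.trans (by linarith [Real.add_one_le_exp t])) n

lemma IsDP.one_lt_of_abs_acceptProb_sub {ε : ℝ} (hM : IsDP M ε 0) (hε0 : 0 ≤ ε)
    (hε1 : ε ≤ 1) (hA : MeasurableSet A) (hp : p ∈ stdSimplex ℝ (Fin k))
    (hq : q ∈ stdSimplex ℝ (Fin k)) (hfar : 1 / 2 < |acceptProb M p A - acceptProb M q A|) :
    1 < 4 * n * ε * ∑ a, |p a - q a| := by
  have hexp : Real.exp ε - 1 ≤ 2 * ε := by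
    have := Real.abs_exp_sub_one_le (x := ε) (by rwa [abs_of_nonneg hε0])
    rw [abs_of_nonneg hε0] at this
    exact (le_abs_self _).trans this
  have hmono : n * (Real.exp ε - 1) * ∑ a, |p a - q a| ≤ n * (2 * ε) * ∑ a, |p a - q a| := by
    gcongr
  linarith [hfar.trans_le (hM.abs_acceptProb_sub_le hε0 hA hp hq)]

end TwoPoint

/-- Sample complexity lower bound for `ε`-DP `k`-ary distribution estimation under total
variation distance: there is a universal constant `c > 0` such that any `ε`-DP estimator
achieving expected TV error at most `α` on every `p ∈ Δ_k` requires
`n ≥ c (k/α² + k/(αε))` samples. -/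
theorem kary_tv_pure_dp_lower_bound :
    ∃ c : ℝ, 0 < c ∧
      ∀ (k : ℕ), 40 ≤ k → ∀ α : ℝ, 0 < α → α < 1 / 48 → ∀ ε : ℝ, 0 < ε → ∀ n : ℕ,
        ∀ est : Kernel (Fin n → Fin k) (simplex k), IsMarkovKernel est → IsDP est ε 0 →
          (∀ p : simplex k,
            ∫⁻ x, ∫⁻ q, ENNReal.ofReal (tvVec q.1 p.1) ∂(est x) ∂(iidSamples n p.1)
              ≤ ENNReal.ofReal α) →
          c * (k / α ^ 2 + k / (α * ε)) ≤ n := by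
  refine ⟨1 / 3000, by norm_num, fun k hk α hα0 hα ε hε n est _ hdp hacc => ?_⟩
  obtain ⟨p, q, hp, hq, hqpos, htv, hchi, A, hA, hfar⟩ :=
    exists_far_pair_of_accurate est (by omega) hα0 (by linarith) hacc
  have hk : (0 : ℝ) < k := by exact_mod_cast (by omega : 0 < k)
  have hstat : k / α ^ 2 ≤ 1458 * n := by
    have h := log_two_lt_of_abs_acceptProb_sub hp.2 hqpos hq.2 hchi hfar
    rw [mul_div_assoc', lt_div_iff₀ hk] at h
    rw [div_le_iff₀ (by positivity)]
    nlinarith [Real.log_two_gt_d9]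
  have hpriv : k / (α * ε) ≤ 1458 * n := by
    rcases le_or_gt ε 1 with hε1 | hε1
    · have h := hdp.one_lt_of_abs_acceptProb_sub hε.le hε1 hA hp hq hfar
      rw [htv, mul_div_assoc', lt_div_iff₀ hk] at h
      rw [div_le_iff₀ (by positivity)]
      nlinarith
    · refine le_trans (div_le_div_of_nonneg_left hk.le (by positivity) ?_) hstat
      nlinarith
  linarith
end
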